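/- Soundness of robust semantics for the until operator: if ρ^{φ1 U_{[t1,t2]} φ2}(y,t) > 0 and robust soundness holds for φ1 and φ2 (i.e., positive robustness implies Boolean satisfaction), then there exists t' ∈ [t1,t2] such that y ⊨_{t'} φ2 and for all t'' ∈ [t,t'], y ⊨_{t''} φ1. -/

import Mathlib

/-!
A positive supremum over `[t1, t2]` is witnessed by some `t'` whose term
`min (b t') (inf of a on [t, t'])` is positive (an empty range would give `sSup ∅ = 0`).
Positivity of that minimum makes `b t'` and every `a t''` on the finite range `[t, t']`
positive, and soundness for `φ1`, `φ2` turns these into Boolean satisfaction.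
-/

/-- Robust semantics of until: max over t' ∈ [t1,t2] of
min(b(t'), min over t'' ∈ [t,t'] of a(t'')). -/
noncomputable def untilRob (a b : ℕ → ℝ) (t1 t2 t : ℕ) : ℝ :=
  sSup ((fun t' => min (b t') (sInf (a '' Set.Icc t t'))) '' Set.Icc t1 t2)

lemma Real.exists_pos_of_sSup_pos {s : Set ℝ} (h : 0 < sSup s) : ∃ x ∈ s, 0 < x := by
  rcases s.eq_empty_or_nonempty with rfl | hs
  · simp at h
  · exact exists_lt_of_lt_csSup hs h

lemma pos_of_sInf_image_Icc_pos {a : ℕ → ℝ} {m n : ℕ} (h : 0 < sInf (a '' Set.Icc m n))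
    {k : ℕ} (hk : k ∈ Set.Icc m n) : 0 < a k :=
  h.trans_le <| csInf_le ((Set.finite_Icc m n).image a).bddBelow ⟨k, hk, rfl⟩

theorem until_sound_general (a b : ℕ → ℝ) (holds1 holds2 : ℕ → Prop) (t t1 t2 : ℕ)
    (hsound1 : ∀ s, 0 < a s → holds1 s)
    (hsound2 : ∀ s, 0 < b s → holds2 s)
    (h : 0 < untilRob a b t1 t2 t) :
    ∃ t' ∈ Set.Icc t1 t2, holds2 t' ∧ ∀ t'' ∈ Set.Icc t t', holds1 t'' := by
  obtain ⟨_, ⟨t', ht', rfl⟩, hpos⟩ := Real.exists_pos_of_sSup_pos h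
  rw [lt_min_iff] at hpos
  exact ⟨t', ht', hsound2 t' hpos.1,
    fun t'' ht'' => hsound1 t'' (pos_of_sInf_image_Icc_pos hpos.2 ht'')⟩

/-- soundness of robust semantics for until. If the until robustness is
positive and positive robustness implies Boolean satisfaction for φ1 and φ2, then
∃ t' ∈ [t1,t2] with y ⊨_{t'} φ2 and ∀ t'' ∈ [t,t'], y ⊨_{t''} φ1. -/
theorem until_sound (a b : ℕ → ℝ) (holds1 holds2 : ℕ → Prop) (t t1 t2 : ℕ)
    (ht : t ≤ t1) (h12 : t1 ≤ t2)
    (hsound1 : ∀ s, 0 < a s → holds1 s)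
    (hsound2 : ∀ s, 0 < b s → holds2 s)
    (h : 0 < untilRob a b t1 t2 t) :
    ∃ t' ∈ Set.Icc t1 t2, holds2 t' ∧ ∀ t'' ∈ Set.Icc t t', holds1 t'' :=
  until_sound_general a b holds1 holds2 t t1 t2 hsound1 hsound2 h
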